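/- In the randomly oriented complete binary tree T_n of height n with parameter p ∈ [0,1], the expected size of the percolation cluster (leaves excluded) is E[|C_n|] = Σ_{k=1}^n 2^{n−k}·(ρ_k(p) + (1 − ρ_k(p))·α^{(n)}_k(p)), where α^{(n)}_k(p) = (1−p)·p·Σ_{i=0}^{n−1−k} (1−p)^i · ρ_{k+i}(p) · ∏_{j=0}^{i−1} (1 − p·ρ_{k+j}(p)). -/

import Mathlib

open MeasureTheory ProbabilityTheory Finset
open scoped Classical

/-- Vertices of the complete binary tree of height `n`: words over `{0,1}`
of length at most `n`.  The empty word is the root; words of length `n`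
are the leaves; the level of `v` is `n - |v|`. -/
def Vtx (n : ℕ) : Type := {l : List Bool // l.length ≤ n}

/-- Edges of the complete binary tree of height `n`, indexed by the nonempty
words of length at most `n`: the edge joins such a word to its predecessor
(the word obtained by deleting the last letter). -/
def Edg (n : ℕ) : Type := {l : List Bool // l ≠ [] ∧ l.length ≤ n}

noncomputable instance (n : ℕ) : Fintype (Vtx n) := by
  apply Fintype.ofInjective (fun v : Vtx n => fun i : Fin (n + 1) => v.1[i.1]?)
  intro u v h
  apply Subtype.ext
  apply List.ext_getElem?
  intro m
  by_cases hm : m < n + 1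
  · exact congrFun h ⟨m, hm⟩
  · have hu := u.2
    have hv := v.2
    rw [List.getElem?_eq_none_iff.2, List.getElem?_eq_none_iff.2] <;> omega

noncomputable instance (n : ℕ) : Fintype (Edg n) := by
  apply Fintype.ofInjective (fun v : Edg n => fun i : Fin (n + 1) => v.1[i.1]?)
  intro u v h
  apply Subtype.ext
  apply List.ext_getElem?
  intro m
  by_cases hm : m < n + 1
  · exact congrFun h ⟨m, hm⟩
  · have hu := u.2.2
    have hv := v.2.2
    rw [List.getElem?_eq_none_iff.2, List.getElem?_eq_none_iff.2] <;> omega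

/-- The Bernoulli measure on `Bool`: `true` has probability `p`,
`false` has probability `1 - p`. -/
noncomputable def bern (p : ℝ) : Measure Bool :=
  (ENNReal.ofReal p) • Measure.dirac true + (ENNReal.ofReal (1 - p)) • Measure.dirac false

instance (p : ℝ) : IsFiniteMeasure (bern p) := by
  constructor
  simp only [bern, Measure.add_apply, Measure.smul_apply, smul_eq_mul]
  exact ENNReal.add_lt_top.mpr
    ⟨ENNReal.mul_lt_top ENNReal.ofReal_lt_top (by simp),
     ENNReal.mul_lt_top ENNReal.ofReal_lt_top (by simp)⟩

/-- The random orientation measure on the complete binary tree of height `n`: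
each edge is oriented towards the root (coordinate `true`) with probability `p`,
independently of the other edges. -/
noncomputable def treeMeasure (n : ℕ) (p : ℝ) : Measure (Edg n → Bool) :=
  Measure.pi fun _ => bern p

/-- One oriented step in the configuration `ω`: `a → b` if the tree edge between
`a` and `b` is oriented from `a` to `b` (coordinate `true` means oriented towards
the root, i.e. towards the shorter word). -/
def TStep {n : ℕ} (ω : Edg n → Bool) (a b : Vtx n) : Prop :=
  ∃ e : Edg n, (ω e = true ∧ e.1 = a.1 ∧ b.1 = e.1.dropLast) ∨
    (ω e = false ∧ e.1 = b.1 ∧ a.1 = e.1.dropLast)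

/-- `X v`: the event that water, pumped into the leaves, reaches `v`, i.e. there is
a directed path from some leaf to `v`. -/
def Xwet {n : ℕ} (v : Vtx n) : Set (Edg n → Bool) :=
  {ω | ∃ w : Vtx n, w.1.length = n ∧ Relation.ReflTransGen (TStep ω) w v}

/-- `Y v`: the event that `v` gets wet in downwards percolation: there is a leaf `w`
above `v` such that every edge on the path from `w` down to `v` is oriented
towards the root. -/
def Ydown {n : ℕ} (v : Vtx n) : Set (Edg n → Bool) :=
  {ω | ∃ w : List Bool, w.length = n ∧ v.1 <+: w ∧
    ∀ u : Edg n, u.1 <+: w → v.1.length < u.1.length → ω u = true}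

/-- The recursion `ρ₀ = 1`, `ρ_{k+1} = 2 p ρ_k - (p ρ_k)²`. -/
noncomputable def rho (p : ℝ) : ℕ → ℝ
  | 0 => 1
  | k + 1 => 2 * p * rho p k - (p * rho p k) ^ 2

/-- `α^{(n)}_k`, the probability that water reaches a level-`k` vertex from below. -/
noncomputable def alpha (p : ℝ) (n k : ℕ) : ℝ :=
  (1 - p) * p * ∑ i ∈ Finset.range (n - k),
    (1 - p) ^ i * rho p (k + i) * ∏ j ∈ Finset.range i, (1 - p * rho p (k + j))

/-- The size of the percolation cluster `C_n` (leaves excluded). -/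
noncomputable def clusterSize (n : ℕ) (ω : Edg n → Bool) : ℕ :=
  Nat.card {v : Vtx n // v.1.length < n ∧ ω ∈ Xwet v}

/-- The size of the downwards percolation cluster `C↓_n` (leaves excluded). -/
noncomputable def downClusterSize (n : ℕ) (ω : Edg n → Bool) : ℕ :=
  Nat.card {v : Vtx n // v.1.length < n ∧ ω ∈ Ydown v}

/-- The maximum level reached by water in downwards percolation. -/
noncomputable def maxLevel (n : ℕ) (ω : Edg n → Bool) : ℕ :=
  sSup ({0} ∪ {k | ∃ v : Vtx n, ω ∈ Ydown v ∧ n - v.1.length = k})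

/-- The root of the tree. -/
def root (n : ℕ) : Vtx n := ⟨[], by simp⟩

set_option maxHeartbeats 1000000
set_option linter.unusedSectionVars false
section Core
variable {ι : Type*} [Fintype ι]

noncomputable def wgt (p : ℝ) (b : Bool) : ℝ := if b then p else 1 - p
noncomputable def Wt (p : ℝ) (ω : ι → Bool) : ℝ := ∏ i, wgt p (ω i)

lemma sum_prod_bool (h : ι → Bool → ℝ) :
    ∑ ω : ι → Bool, ∏ i, h i (ω i) = ∏ i, (h i true + h i false) := by
  classical
  have := Finset.prod_univ_sum (fun _ : ι => (Finset.univ : Finset Bool)) (fun i j => h i j)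
  rw [Fintype.piFinset_univ] at this
  rw [← this]
  congr 1
  funext i
  simp [Fintype.sum_bool, add_comm]

lemma sum_Wt (p : ℝ) : ∑ ω : ι → Bool, Wt p ω = 1 := by
  rw [show (∑ ω : ι → Bool, Wt p ω) = ∑ ω : ι → Bool, ∏ i, wgt p (ω i) from rfl,
    sum_prod_bool]
  simp [wgt]

lemma sum_factor (p : ℝ) (A : ι → Prop) (F G : (ι → Bool) → ℝ)
    (hF : ∀ ω ω', (∀ i, A i → ω i = ω' i) → F ω = F ω')
    (hG : ∀ ω ω', (∀ i, ¬ A i → ω i = ω' i) → G ω = G ω') :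
    ∑ ω : ι → Bool, Wt p ω * (F ω * G ω)
      = (∑ ω : ι → Bool, Wt p ω * F ω) * (∑ ω : ι → Bool, Wt p ω * G ω) := by
  classical
  set e : ((i : {x // A x}) → Bool) × ((i : {x // ¬ A x}) → Bool) ≃ (ι → Bool) :=
    (Equiv.piEquivPiSubtypeProd A (fun _ => Bool)).symm with he
  have he_app : ∀ (σ : {x // A x} → Bool) (τ : {x // ¬ A x} → Bool) (i : ι),
      e (σ, τ) i = if h : A i then σ ⟨i, h⟩ else τ ⟨i, h⟩ := by
    intro σ τ i; rfl
  have hWt : ∀ σ τ, Wt p (e (σ, τ))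
      = (∏ i : {x // A x}, wgt p (σ i)) * (∏ i : {x // ¬ A x}, wgt p (τ i)) := by
    intro σ τ
    rw [show Wt p (e (σ, τ)) = ∏ i, wgt p (e (σ, τ) i) from rfl,
      ← Fintype.prod_subtype_mul_prod_subtype A (fun i => wgt p (e (σ, τ) i))]
    congr 1
    · exact Finset.prod_congr rfl fun i _ => by rw [he_app, dif_pos i.2]
    · exact Finset.prod_congr rfl fun i _ => by rw [he_app, dif_neg i.2]
  set τ₀ : {x // ¬ A x} → Bool := fun _ => true
  set σ₀ : {x // A x} → Bool := fun _ => true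
  have hFe : ∀ σ τ, F (e (σ, τ)) = F (e (σ, τ₀)) := by
    intro σ τ
    apply hF
    intro i hi
    rw [he_app, he_app, dif_pos hi, dif_pos hi]
  have hGe : ∀ σ τ, G (e (σ, τ)) = G (e (σ₀, τ)) := by
    intro σ τ
    apply hG
    intro i hi
    rw [he_app, he_app, dif_neg hi, dif_neg hi]
  have hsub1 : ∑ τ : {x // ¬ A x} → Bool, ∏ i, wgt p (τ i) = 1 := by
    have h2 := sum_prod_bool (ι := {x // ¬ A x}) (fun _ b => wgt p b)
    have h3 : ∏ _x : {x // ¬ A x}, (wgt p true + wgt p false) = 1 := by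
      simp [wgt]
    refine Eq.trans ?_ (h2.trans h3)
    congr!
  have hsub2 : ∑ σ : {x // A x} → Bool, ∏ i, wgt p (σ i) = 1 := by
    have h2 := sum_prod_bool (ι := {x // A x}) (fun _ b => wgt p b)
    have h3 : ∏ _x : {x // A x}, (wgt p true + wgt p false) = 1 := by
      simp [wgt]
    refine Eq.trans ?_ (h2.trans h3)
    congr!
  have hB : ∑ ω : ι → Bool, Wt p ω * F ω
      = ∑ σ, (∏ i : {x // A x}, wgt p (σ i)) * F (e (σ, τ₀)) := by
    calc ∑ ω : ι → Bool, Wt p ω * F ω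
        = ∑ q, Wt p (e q) * F (e q) := (Equiv.sum_comp e _).symm
      _ = ∑ σ, ∑ τ, Wt p (e (σ, τ)) * F (e (σ, τ)) := Fintype.sum_prod_type _
      _ = ∑ σ, (∏ i : {x // A x}, wgt p (σ i)) * F (e (σ, τ₀)) := by
          apply Finset.sum_congr rfl; intro σ _
          rw [show (∑ τ, Wt p (e (σ, τ)) * F (e (σ, τ)))
              = ∑ τ, (∏ i, wgt p (τ i)) * ((∏ i : {x // A x}, wgt p (σ i)) * F (e (σ, τ₀))) from
            Finset.sum_congr rfl fun τ _ => by rw [hWt, hFe]; ring]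
          rw [← Finset.sum_mul, hsub1, one_mul]
  have hC : ∑ ω : ι → Bool, Wt p ω * G ω
      = ∑ τ, (∏ i : {x // ¬ A x}, wgt p (τ i)) * G (e (σ₀, τ)) := by
    calc ∑ ω : ι → Bool, Wt p ω * G ω
        = ∑ q, Wt p (e q) * G (e q) := (Equiv.sum_comp e _).symm
      _ = ∑ σ, ∑ τ, Wt p (e (σ, τ)) * G (e (σ, τ)) := Fintype.sum_prod_type _
      _ = ∑ τ, ∑ σ, Wt p (e (σ, τ)) * G (e (σ, τ)) := Finset.sum_comm
      _ = ∑ τ, (∏ i : {x // ¬ A x}, wgt p (τ i)) * G (e (σ₀, τ)) := by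
          apply Finset.sum_congr rfl; intro τ _
          rw [show (∑ σ, Wt p (e (σ, τ)) * G (e (σ, τ)))
              = ∑ σ, (∏ i, wgt p (σ i)) * ((∏ i : {x // ¬ A x}, wgt p (τ i)) * G (e (σ₀, τ))) from
            Finset.sum_congr rfl fun σ _ => by rw [hWt, hGe]; ring]
          rw [← Finset.sum_mul, hsub2, one_mul]
  calc ∑ ω : ι → Bool, Wt p ω * (F ω * G ω)
      = ∑ q, Wt p (e q) * (F (e q) * G (e q)) := (Equiv.sum_comp e _).symm
    _ = ∑ σ, ∑ τ, Wt p (e (σ, τ)) * (F (e (σ, τ)) * G (e (σ, τ))) := Fintype.sum_prod_type _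
    _ = (∑ σ, (∏ i : {x // A x}, wgt p (σ i)) * F (e (σ, τ₀)))
        * (∑ τ, (∏ i : {x // ¬ A x}, wgt p (τ i)) * G (e (σ₀, τ))) := by
        rw [Finset.sum_mul_sum]
        apply Finset.sum_congr rfl; intro σ _
        apply Finset.sum_congr rfl; intro τ _
        rw [hWt, hFe, hGe]; ring
    _ = (∑ ω : ι → Bool, Wt p ω * F ω) * (∑ ω : ι → Bool, Wt p ω * G ω) := by
        rw [hB, hC]


/-- A set depends only on coordinates satisfying `A`. -/
def DepOn (S : Set (ι → Bool)) (A : ι → Prop) : Prop :=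
  ∀ ω ω' : ι → Bool, (∀ i, A i → ω i = ω' i) → ω ∈ S → ω' ∈ S

lemma DepOn.mono {S : Set (ι → Bool)} {A B : ι → Prop} (h : DepOn S A)
    (hAB : ∀ i, A i → B i) : DepOn S B :=
  fun ω ω' hag => h ω ω' (fun i hi => hag i (hAB i hi))

lemma DepOn.inter {S T : Set (ι → Bool)} {A : ι → Prop} (hS : DepOn S A) (hT : DepOn T A) :
    DepOn (S ∩ T) A :=
  fun ω ω' hag hm => ⟨hS ω ω' hag hm.1, hT ω ω' hag hm.2⟩

lemma DepOn.union {S T : Set (ι → Bool)} {A : ι → Prop} (hS : DepOn S A) (hT : DepOn T A) :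
    DepOn (S ∪ T) A :=
  fun ω ω' hag hm => hm.elim (fun h => Or.inl (hS ω ω' hag h)) (fun h => Or.inr (hT ω ω' hag h))

lemma DepOn.compl {S : Set (ι → Bool)} {A : ι → Prop} (hS : DepOn S A) :
    DepOn Sᶜ A :=
  fun ω ω' hag hm hc => hm (hS ω' ω (fun i hi => (hag i hi).symm) hc)

lemma DepOn.iff {S : Set (ι → Bool)} {A : ι → Prop} (hS : DepOn S A)
    {ω ω' : ι → Bool} (hag : ∀ i, A i → ω i = ω' i) : ω ∈ S ↔ ω' ∈ S :=
  ⟨hS ω ω' hag, hS ω' ω (fun i hi => (hag i hi).symm)⟩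

noncomputable def Pr (p : ℝ) (S : Set (ι → Bool)) : ℝ :=
  ∑ ω : ι → Bool, if ω ∈ S then Wt p ω else 0

lemma Pr_univ (p : ℝ) : Pr p (Set.univ : Set (ι → Bool)) = 1 := by
  simp only [Pr, Set.mem_univ, if_true]; exact sum_Wt p

lemma Pr_empty (p : ℝ) : Pr p (∅ : Set (ι → Bool)) = 0 := by simp [Pr]

lemma Pr_union_add_inter (p : ℝ) (S T : Set (ι → Bool)) :
    Pr p (S ∪ T) + Pr p (S ∩ T) = Pr p S + Pr p T := by
  unfold Pr
  rw [← Finset.sum_add_distrib, ← Finset.sum_add_distrib]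
  apply Finset.sum_congr rfl; intro ω _
  by_cases hS : ω ∈ S <;> by_cases hT : ω ∈ T <;>
    simp [hS, hT, Set.mem_union, Set.mem_inter_iff]

lemma Pr_compl (p : ℝ) (S : Set (ι → Bool)) : Pr p Sᶜ = 1 - Pr p S := by
  have h := Pr_union_add_inter p S Sᶜ
  rw [Set.union_compl_self, Set.inter_compl_self, Pr_univ, Pr_empty] at h
  linarith

lemma Pr_union_disjoint (p : ℝ) {S T : Set (ι → Bool)} (h : S ∩ T = ∅) :
    Pr p (S ∪ T) = Pr p S + Pr p T := by
  have := Pr_union_add_inter p S T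
  rw [h, Pr_empty] at this
  linarith

/-- Independence. -/
lemma Pr_inter_indep (p : ℝ) {S T : Set (ι → Bool)} {A B : ι → Prop}
    (hS : DepOn S A) (hT : DepOn T B) (hAB : ∀ i, A i → B i → False) :
    Pr p (S ∩ T) = Pr p S * Pr p T := by
  classical
  have hmain := sum_factor p A (fun ω => if ω ∈ S then (1:ℝ) else 0)
    (fun ω => if ω ∈ T then (1:ℝ) else 0)
    (fun ω ω' hag => by
      show (if ω ∈ S then (1:ℝ) else 0) = (if ω' ∈ S then (1:ℝ) else 0)
      by_cases h : ω ∈ S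
      · rw [if_pos h, if_pos (hS ω ω' hag h)]
      · rw [if_neg h, if_neg (fun h' => h (hS ω' ω (fun i hi => (hag i hi).symm) h'))])
    (fun ω ω' hag => by
      show (if ω ∈ T then (1:ℝ) else 0) = (if ω' ∈ T then (1:ℝ) else 0)
      have hag' : ∀ i, B i → ω i = ω' i := fun i hi => hag i (fun hA => hAB i hA hi)
      by_cases h : ω ∈ T
      · rw [if_pos h, if_pos (hT ω ω' hag' h)]
      · rw [if_neg h, if_neg (fun h' => h (hT ω' ω (fun i hi => (hag' i hi).symm) h'))])
  have e1 : ∀ (U : Set (ι → Bool)),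
      Pr p U = ∑ ω : ι → Bool, Wt p ω * (if ω ∈ U then (1:ℝ) else 0) := by
    intro U
    apply Finset.sum_congr rfl; intro ω _
    by_cases h : ω ∈ U <;> simp [h]
  rw [e1, e1, e1, ← hmain]
  apply Finset.sum_congr rfl; intro ω _
  by_cases h1 : ω ∈ S <;> by_cases h2 : ω ∈ T <;>
    simp [h1, h2, Set.mem_inter_iff]

/-- Probability of a single coordinate event. -/
lemma Pr_coord (p : ℝ) (e₀ : ι) (b : Bool) :
    Pr p {ω : ι → Bool | ω e₀ = b} = wgt p b := by
  classical
  set hfun : ι → Bool → ℝ := fun i b' => if i = e₀ then (if b' = b then wgt p b' else 0)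
    else wgt p b' with hhfun
  have key : Pr p {ω : ι → Bool | ω e₀ = b} = ∑ ω : ι → Bool, ∏ i, hfun i (ω i) := by
    apply Finset.sum_congr rfl; intro ω _
    simp only [Set.mem_setOf_eq]
    by_cases h : ω e₀ = b
    · rw [if_pos h]
      exact Finset.prod_congr rfl fun i _ => by
        by_cases hi : i = e₀ <;> simp [hhfun, hi, h]
    · rw [if_neg h]
      refine (Finset.prod_eq_zero (Finset.mem_univ e₀) ?_).symm
      simp [hhfun, h]
  rw [key, sum_prod_bool hfun]
  rw [Finset.prod_eq_single e₀ ?_ ?_]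
  · cases b <;> simp [hhfun, wgt]
  · intro i _ hi
    simp only [hhfun, if_neg hi, wgt]
    norm_num
  · intro h; exact absurd (Finset.mem_univ e₀) h

end Core


section Tree
variable {n : ℕ}

/-- strict extensions of `v` -/
def ExtS (v : Vtx n) : Edg n → Prop := fun u => v.1 <+: u.1 ∧ v.1.length < u.1.length

/-- weak extensions of `v` -/
def ExtW (v : Vtx n) : Edg n → Prop := fun u => v.1 <+: u.1

lemma extS_extW {v : Vtx n} {u : Edg n} (h : ExtS v u) : ExtW v u := h.1

lemma dep_Ydown (v : Vtx n) : DepOn (Ydown v) (ExtS v) := by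
  intro ω ω' hag hm
  obtain ⟨w, hw, hvw, hall⟩ := hm
  refine ⟨w, hw, hvw, fun u hu hlen => ?_⟩
  rw [← hag u ⟨List.prefix_of_prefix_length_le hvw hu (le_of_lt hlen), hlen⟩]
  exact hall u hu hlen

lemma dep_coord (e : Edg n) (b : Bool) :
    DepOn {ω : Edg n → Bool | ω e = b} (fun u => u = e) := by
  intro ω ω' hag hm
  simp only [Set.mem_setOf_eq] at hm ⊢
  rw [← hag e rfl]; exact hm

lemma Ydown_leaf (v : Vtx n) (h : v.1.length = n) : Ydown v = Set.univ := by
  ext ω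
  simp only [Ydown, Set.mem_setOf_eq, Set.mem_univ, iff_true]
  refine ⟨v.1, h, List.prefix_refl _, fun u hu hlen => ?_⟩
  have h1 := List.IsPrefix.length_le hu
  omega

def childV (v : Vtx n) (b : Bool) (h : v.1.length < n) : Vtx n :=
  ⟨v.1 ++ [b], by rw [List.length_append]; simpa using h⟩

def childE (v : Vtx n) (b : Bool) (h : v.1.length < n) : Edg n :=
  ⟨v.1 ++ [b], by simp, by rw [List.length_append]; simpa using h⟩

lemma childV_length (v : Vtx n) (b : Bool) (h : v.1.length < n) :
    (childV v b h).1.length = v.1.length + 1 := by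
  simp [childV]

lemma Ydown_rec (v : Vtx n) (h : v.1.length < n) :
    Ydown v =
      ({ω : Edg n → Bool | ω (childE v false h) = true} ∩ Ydown (childV v false h)) ∪
      ({ω : Edg n → Bool | ω (childE v true h) = true} ∩ Ydown (childV v true h)) := by
  ext ω
  constructor
  · rintro ⟨w, hwlen, hvw, hall⟩
    have hlenw : v.1.length < w.length := by omega
    set b : Bool := w[v.1.length] with hb
    have hvtake : v.1 = w.take v.1.length := List.prefix_iff_eq_take.mp hvw
    have htake : w.take (v.1.length + 1) = v.1 ++ [b] := by
      rw [List.take_succ, ← hvtake, List.getElem?_eq_getElem hlenw]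
      rfl
    have hpfx : v.1 ++ [b] <+: w := htake ▸ List.take_prefix _ _
    have hmem : ω ∈ {ω : Edg n → Bool | ω (childE v b h) = true} ∩ Ydown (childV v b h) := by
      constructor
      · exact hall (childE v b h) hpfx (by simp [childE])
      · refine ⟨w, hwlen, hpfx, fun u hu hlen => hall u hu ?_⟩
        rw [childV_length] at hlen; omega
    by_cases hb2 : b = true
    · rw [hb2] at hmem; exact Or.inr hmem
    · rw [Bool.not_eq_true] at hb2; rw [hb2] at hmem; exact Or.inl hmem
  · intro hm
    have key : ∀ b : Bool,
        ω ∈ {ω : Edg n → Bool | ω (childE v b h) = true} ∩ Ydown (childV v b h) →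
        ω ∈ Ydown v := by
      rintro b ⟨hc, w, hwlen, hcw, hall⟩
      refine ⟨w, hwlen, (List.prefix_append _ _).trans hcw, fun u hu hlen => ?_⟩
      by_cases hu2 : v.1.length + 1 < u.1.length
      · exact hall u hu (by rw [childV_length]; omega)
      · have hulen : u.1.length = v.1.length + 1 := by omega
        have h1 : u.1 = w.take (v.1.length + 1) := by
          rw [← hulen]; exact List.prefix_iff_eq_take.mp hu
        have h2 : (v.1 ++ [b] : List Bool) = w.take (v.1.length + 1) := by
          have := List.prefix_iff_eq_take.mp hcw
          simpa [childV] using this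
        have : u = childE v b h := Subtype.ext (by rw [h1, ← h2]; rfl)
        rw [this]; exact hc
    rcases hm with hm | hm
    · exact key false hm
    · exact key true hm

lemma Pr_Ydown (p : ℝ) (v : Vtx n) : Pr p (Ydown v) = rho p (n - v.1.length) := by
  generalize hk : n - v.1.length = k
  induction k generalizing v with
  | zero =>
    have h : v.1.length = n := by have := v.2; omega
    rw [Ydown_leaf v h, Pr_univ, rho]
  | succ k ih =>
    have h : v.1.length < n := by omega
    rw [Ydown_rec v h]
    have hdepS : ∀ b (hb : v.1.length < n),
        DepOn ({ω : Edg n → Bool | ω (childE v b hb) = true} ∩ Ydown (childV v b hb))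
          (ExtW (childV v b hb)) := by
      intro b hb
      apply DepOn.inter
      · exact (dep_coord _ _).mono (fun u hu => by
          rw [hu]; exact List.prefix_refl _)
      · exact (dep_Ydown _).mono (fun u hu => extS_extW hu)
    have hPrb : ∀ b,
        Pr p ({ω : Edg n → Bool | ω (childE v b h) = true} ∩ Ydown (childV v b h))
          = p * rho p k := by
      intro b
      rw [Pr_inter_indep p (dep_coord (childE v b h) true) (dep_Ydown (childV v b h))
        (fun u hu1 hu2 => by
          rw [hu1] at hu2
          have := hu2.2
          simp [childE, childV] at this)]
      rw [Pr_coord, ih (childV v b h) (by rw [childV_length]; omega)]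
      simp [wgt]
    have hdisj : ∀ u : Edg n, ExtW (childV v false h) u → ExtW (childV v true h) u → False := by
      intro u h1 h2
      have hlen : (childV v false h).1.length ≤ (childV v true h).1.length := by
        rw [childV_length, childV_length]
      have := List.prefix_of_prefix_length_le h1 h2 hlen
      have heq : (childV v false h).1 = (childV v true h).1 :=
        List.IsPrefix.eq_of_length this (by rw [childV_length, childV_length])
      simp [childV] at heq
    have hint := Pr_union_add_inter p
      ({ω : Edg n → Bool | ω (childE v false h) = true} ∩ Ydown (childV v false h))
      ({ω : Edg n → Bool | ω (childE v true h) = true} ∩ Ydown (childV v true h))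
    rw [Pr_inter_indep p (hdepS false h) (hdepS true h) hdisj] at hint
    rw [hPrb false, hPrb true] at hint
    have : rho p (k+1) = 2 * p * rho p k - (p * rho p k)^2 := rfl
    rw [this]
    nlinarith [hint]
end Tree


section Sib
variable {n : ℕ}

/-- The sibling word: flip the letter of `v` at distance `i+1` from the end. -/
def sibW (v : Vtx n) (i : ℕ) : List Bool :=
  v.1.take (v.1.length - i - 1) ++ ((v.1.drop (v.1.length - i - 1)).take 1).map (!·)

lemma sibW_length_le (v : Vtx n) (i : ℕ) : (sibW v i).length ≤ v.1.length := by
  unfold sibW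
  rw [List.length_append, List.length_map, List.length_take, List.length_take,
    List.length_drop]
  omega

lemma sibW_eq (v : Vtx n) (i : ℕ) (h : i < v.1.length) :
    sibW v i = v.1.take (v.1.length - i - 1) ++ [!v.1[v.1.length - i - 1]'(by omega)] := by
  unfold sibW
  congr 1
  have hd : (v.1.drop (v.1.length - i - 1)).take 1
      = [v.1[v.1.length - i - 1]'(by omega)] := by
    have hlen : 0 < (v.1.drop (v.1.length - i - 1)).length := by
      rw [List.length_drop]; omega
    have : (v.1.drop (v.1.length - i - 1)).take 1
        = [(v.1.drop (v.1.length - i - 1))[0]'hlen] := by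
      show List.take (0+1) _ = _
      rw [List.take_succ]
      simp [List.getElem?_eq_getElem hlen]
    rw [this, List.getElem_drop]
    norm_num
  rw [hd]
  simp

lemma sibW_length (v : Vtx n) (i : ℕ) (h : i < v.1.length) :
    (sibW v i).length = v.1.length - i := by
  rw [sibW_eq v i h, List.length_append, List.length_take]
  simp; omega

lemma sibW_ne_nil (v : Vtx n) (i : ℕ) (h : i < v.1.length) : sibW v i ≠ [] := by
  apply List.ne_nil_of_length_pos
  rw [sibW_length v i h]; omega

/-- The sibling of `v`'s ancestor, as a vertex. -/
def sibV (v : Vtx n) (i : ℕ) : Vtx n :=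
  ⟨sibW v i, le_trans (sibW_length_le v i) v.2⟩

/-- `sibW v i` is never a prefix of `v`. -/
lemma sibW_not_prefix (v : Vtx n) (i : ℕ) (h : i < v.1.length) : ¬ sibW v i <+: v.1 := by
  intro hpfx
  have hlen := sibW_length v i h
  have heq : sibW v i = v.1.take (v.1.length - i) := by
    rw [← hlen]; exact List.prefix_iff_eq_take.mp hpfx
  have hm : v.1.length - i - 1 < (sibW v i).length := by omega
  have h1 : (sibW v i)[v.1.length - i - 1]'hm = !v.1[v.1.length - i - 1]'(by omega) := by
    rw [List.getElem_of_eq (sibW_eq v i h)]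
    exact List.getElem_concat_length (by rw [List.length_take]; omega) _
  have h2 : (sibW v i)[v.1.length - i - 1]'hm = v.1[v.1.length - i - 1]'(by omega) := by
    rw [List.getElem_of_eq heq]
    exact List.getElem_take
  rw [h1] at h2
  exact Bool.not_ne_self _ h2

/-- Nothing can extend both `sibW v i` and `sibW v j` for `i ≠ j`. -/
lemma sibW_disj (v : Vtx n) {i j : ℕ} (hi : i < v.1.length) (hj : j < v.1.length)
    (hij : i ≠ j) (l : List Bool) (h1 : sibW v i <+: l) (h2 : sibW v j <+: l) : False := by
  -- wlog j < i, so |sibW v i| < |sibW v j|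
  rcases Nat.lt_or_ge i j with hlt | hge
  · exact sibW_disj v hj hi hij.symm l h2 h1
  · have hlt : j < i := by omega
    have hlen : (sibW v i).length < (sibW v j).length := by
      rw [sibW_length v i hi, sibW_length v j hj]; omega
    have hpp : sibW v i <+: sibW v j :=
      List.prefix_of_prefix_length_le h1 h2 (le_of_lt hlen)
    -- sibW v j = take ++ [x]; sibW v i is a prefix of the take-part, which is a prefix of v
    have hpre : sibW v i <+: v.1.take (v.1.length - j - 1) := by
      refine List.prefix_of_prefix_length_le (l₃ := v.1.take (v.1.length - j - 1) ++ [!v.1[v.1.length - j - 1]'(by omega)]) ?_ ?_ ?_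
      · exact hpp.trans (by rw [sibW_eq v j hj])
      · exact (List.prefix_append _ _).trans (by rw [← sibW_eq v j hj])
      · rw [sibW_length v i hi, List.length_take]; omega
    exact sibW_not_prefix v i hi (hpre.trans (List.take_prefix _ _))
decreasing_by omega

/-- Nothing can be both a prefix of `v` and an extension of `sibW v i`. -/
lemma sibW_not_ext_prefix (v : Vtx n) (i : ℕ) (h : i < v.1.length) (l : List Bool)
    (hl : l <+: v.1) (hext : sibW v i <+: l) : False :=
  sibW_not_prefix v i h (hext.trans hl)

end Sib


section Events
variable {n : ℕ}

def Cset (v : Vtx n) (i : ℕ) : Set (Edg n → Bool) :=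
  {ω | ∀ u : Edg n, (∃ m, v.1.length - i ≤ m ∧ m ≤ v.1.length ∧ u.1 = v.1.take m) → ω u = false}

def Fset (v : Vtx n) (i : ℕ) : Set (Edg n → Bool) :=
  {ω | ∀ u : Edg n, u.1 = sibW v i → ω u = true} ∩ Ydown (sibV v i)

def Dset (v : Vtx n) (i : ℕ) : Set (Edg n → Bool) := Cset v i ∩ Fset v i

def Hset (v : Vtx n) : ℕ → Set (Edg n → Bool)
  | 0 => Set.univ
  | (i+1) => Hset v i ∩ (Fset v i)ᶜ

def Eset (v : Vtx n) (i : ℕ) : Set (Edg n → Bool) := Cset v i ∩ (Fset v i ∩ Hset v i)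

def Uset (v : Vtx n) : ℕ → Set (Edg n → Bool)
  | 0 => ∅
  | (i+1) => Uset v i ∪ Dset v i

def EUset (v : Vtx n) : ℕ → Set (Edg n → Bool)
  | 0 => ∅
  | (i+1) => EUset v i ∪ Eset v i

def ChainA (v : Vtx n) (i : ℕ) : Edg n → Prop :=
  fun u => ∃ m, v.1.length - i ≤ m ∧ m ≤ v.1.length ∧ u.1 = v.1.take m

def SibA (v : Vtx n) (i : ℕ) : Edg n → Prop := fun u => ExtW (sibV v i) u

def UA (v : Vtx n) : Edg n → Prop :=
  fun u => (∃ m, m ≤ v.1.length ∧ u.1 = v.1.take m) ∨ ∃ j, j < v.1.length ∧ SibA v j u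

lemma dep_Cset (v : Vtx n) (i : ℕ) : DepOn (Cset v i) (ChainA v i) := by
  intro ω ω' hag hm u hu
  rw [← hag u hu]; exact hm u hu

lemma dep_Fset (v : Vtx n) (i : ℕ) : DepOn (Fset v i) (SibA v i) := by
  apply DepOn.inter
  · intro ω ω' hag hm u hu
    have hp : SibA v i u := by
      show (sibV v i).1 <+: u.1
      rw [hu]
      exact List.prefix_refl _
    rw [← hag u hp]; exact hm u hu
  · exact (dep_Ydown _).mono (fun u hu => extS_extW hu)

lemma dep_Hset (v : Vtx n) (i : ℕ) :
    DepOn (Hset v i) (fun u => ∃ j, j < i ∧ SibA v j u) := by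
  induction i with
  | zero => intro ω ω' _ hm; exact hm
  | succ i ih =>
    show DepOn (Hset v i ∩ (Fset v i)ᶜ) _
    apply DepOn.inter
    · exact ih.mono (fun u ⟨j, hj, hu⟩ => ⟨j, by omega, hu⟩)
    · exact (dep_Fset v i).compl.mono (fun u hu => ⟨i, by omega, hu⟩)

lemma dep_FHset (v : Vtx n) (i : ℕ) :
    DepOn (Fset v i ∩ Hset v i) (fun u => ∃ j, j ≤ i ∧ SibA v j u) := by
  apply DepOn.inter
  · exact (dep_Fset v i).mono (fun u hu => ⟨i, le_refl _, hu⟩)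
  · exact (dep_Hset v i).mono (fun u ⟨j, hj, hu⟩ => ⟨j, by omega, hu⟩)

lemma dep_Uset (v : Vtx n) (m : ℕ) (hm : m ≤ v.1.length) : DepOn (Uset v m) (UA v) := by
  induction m with
  | zero => intro ω ω' _ h; exact h.elim
  | succ i ih =>
    show DepOn (Uset v i ∪ Dset v i) _
    apply DepOn.union
    · exact ih (by omega)
    · apply DepOn.inter
      · exact (dep_Cset v i).mono (fun u ⟨m', h1, h2, h3⟩ => Or.inl ⟨m', h2, h3⟩)
      · exact (dep_Fset v i).mono (fun u hu => Or.inr ⟨i, by omega, hu⟩)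

lemma chainA_prefix {v : Vtx n} {i : ℕ} {u : Edg n} (h : ChainA v i u) : u.1 <+: v.1 := by
  obtain ⟨m, _, _, h3⟩ := h
  rw [h3]; exact List.take_prefix _ _

lemma sibA_chain_disj {v : Vtx n} {j : ℕ} (hj : j < v.1.length) {u : Edg n}
    (hs : SibA v j u) (hc : u.1 <+: v.1) : False :=
  sibW_not_ext_prefix v j hj u.1 hc hs

lemma sibA_disj {v : Vtx n} {i j : ℕ} (hi : i < v.1.length) (hj : j < v.1.length)
    (hij : i ≠ j) {u : Edg n} (h1 : SibA v i u) (h2 : SibA v j u) : False :=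
  sibW_disj v hi hj hij u.1 h1 h2

lemma extS_UA_disj {v : Vtx n} {u : Edg n} (h1 : ExtS v u) (h2 : UA v u) : False := by
  rcases h2 with ⟨m, hm, hu⟩ | ⟨j, hj, hu⟩
  · have : u.1.length ≤ v.1.length := by
      rw [hu, List.length_take]; omega
    have := h1.2
    omega
  · have hcomp : sibW v j <+: v.1 := by
      apply List.prefix_of_prefix_length_le hu h1.1
      exact sibW_length_le v j
    exact sibW_not_prefix v j hj hcomp

/-- the sibling edge -/
def sibE (v : Vtx n) (i : ℕ) (h : i < v.1.length) : Edg n :=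
  ⟨sibW v i, sibW_ne_nil v i h, le_trans (sibW_length_le v i) v.2⟩

lemma Pr_Fset (p : ℝ) (v : Vtx n) (i : ℕ) (h : i < v.1.length) :
    Pr p (Fset v i) = p * rho p (n - v.1.length + i) := by
  have hFeq : Fset v i = {ω : Edg n → Bool | ω (sibE v i h) = true} ∩ Ydown (sibV v i) := by
    unfold Fset
    congr 1
    ext ω
    simp only [Set.mem_setOf_eq]
    constructor
    · intro hall; exact hall _ rfl
    · intro h1 u hu
      have : u = sibE v i h := Subtype.ext hu
      rw [this]; exact h1
  rw [hFeq, Pr_inter_indep p (dep_coord _ _) (dep_Ydown _) ?_, Pr_coord, Pr_Ydown]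
  · have hlen : (sibV v i).1.length = v.1.length - i := sibW_length v i h
    have hv := v.2
    have hkk : n - (sibV v i).1.length = n - v.1.length + i := by rw [hlen]; omega
    rw [hkk]; simp [wgt]
  · intro u hu1 hu2
    have hlt := hu2.2
    rw [hu1] at hlt
    have : (sibV v i).1.length = (sibE v i h).1.length := rfl
    omega

/-- the edge ending at a nonempty prefix of `v` -/
def preE (v : Vtx n) (m : ℕ) (h1 : 1 ≤ m) (h2 : m ≤ v.1.length) : Edg n :=
  ⟨v.1.take m,
    List.ne_nil_of_length_pos (by rw [List.length_take]; omega),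
    le_trans (by rw [List.length_take]; omega : (v.1.take m).length ≤ v.1.length) v.2⟩

lemma Pr_Cset (p : ℝ) (v : Vtx n) : ∀ i, i < v.1.length → Pr p (Cset v i) = (1-p)^(i+1)
  | 0, h => by
    have h1 : (1:ℕ) ≤ v.1.length := by omega
    have heq : Cset v 0 = {ω : Edg n → Bool | ω (preE v v.1.length h1 (le_refl _)) = false} := by
      ext ω
      simp only [Cset, Set.mem_setOf_eq]
      constructor
      · intro hall
        exact hall _ ⟨v.1.length, by omega, le_refl _, rfl⟩
      · rintro hc u ⟨m, hm1, hm2, hu⟩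
        have hm : m = v.1.length := by omega
        have : u = preE v v.1.length h1 (le_refl _) := Subtype.ext (by rw [hu, hm]; rfl)
        rw [this]; exact hc
    rw [heq, Pr_coord]
    simp [wgt]
  | (i+1), h => by
    have h1 : (1:ℕ) ≤ v.1.length - i - 1 := by omega
    have h2 : v.1.length - i - 1 ≤ v.1.length := by omega
    have heq : Cset v (i+1)
        = {ω : Edg n → Bool | ω (preE v (v.1.length - i - 1) h1 h2) = false} ∩ Cset v i := by
      ext ω
      simp only [Cset, Set.mem_setOf_eq, Set.mem_inter_iff]
      constructor
      · intro hall
        exact ⟨hall _ ⟨v.1.length - i - 1, by omega, h2, rfl⟩,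
          fun u ⟨m, hm1, hm2, hu⟩ => hall u ⟨m, by omega, hm2, hu⟩⟩
      · rintro ⟨hc, hC⟩ u ⟨m, hm1, hm2, hu⟩
        by_cases hcase : v.1.length - i ≤ m
        · exact hC u ⟨m, hcase, hm2, hu⟩
        · have hm : m = v.1.length - i - 1 := by omega
          have : u = preE v (v.1.length - i - 1) h1 h2 := Subtype.ext (by rw [hu, hm]; rfl)
          rw [this]; exact hc
    rw [heq, Pr_inter_indep p (dep_coord _ _) (dep_Cset v i) ?_, Pr_coord,
      Pr_Cset p v i (by omega)]
    · have hw : wgt p false = 1 - p := by simp [wgt]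
      rw [hw, pow_succ]
      ring
    · rintro u hu1 ⟨m, hm1, hm2, hu⟩
      rw [hu1] at hu
      have e1 : (preE v (v.1.length - i - 1) h1 h2).1.length = v.1.length - i - 1 := by
        show (v.1.take _).length = _
        rw [List.length_take]; omega
      have e2 : (preE v (v.1.length - i - 1) h1 h2).1.length = m := by
        rw [hu, List.length_take]; omega
      omega

lemma Pr_Hset (p : ℝ) (v : Vtx n) : ∀ i, i ≤ v.1.length →
    Pr p (Hset v i) = ∏ j ∈ Finset.range i, (1 - p * rho p (n - v.1.length + j))
  | 0, _ => by
    show Pr p Set.univ = _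
    rw [Pr_univ]; simp
  | (i+1), h => by
    show Pr p (Hset v i ∩ (Fset v i)ᶜ) = _
    rw [Pr_inter_indep p (dep_Hset v i) (dep_Fset v i).compl ?_,
      Pr_compl, Pr_Fset p v i (by omega), Pr_Hset p v i (by omega),
      Finset.prod_range_succ]
    · rintro u ⟨j, hj, hu⟩ hu2
      exact sibA_disj (by omega) (by omega) (by omega) hu hu2
  
lemma Pr_Eset (p : ℝ) (v : Vtx n) (i : ℕ) (h : i < v.1.length) :
    Pr p (Eset v i) = (1-p)^(i+1) *
      (p * rho p (n - v.1.length + i) *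
        ∏ j ∈ Finset.range i, (1 - p * rho p (n - v.1.length + j))) := by
  unfold Eset
  rw [Pr_inter_indep p (dep_Cset v i) (dep_FHset v i) ?_,
    Pr_inter_indep p (dep_Fset v i) (dep_Hset v i) ?_,
    Pr_Cset p v i h, Pr_Fset p v i h, Pr_Hset p v i (by omega)]
  · rintro u hu1 ⟨j, hj, hu2⟩
    exact sibA_disj h (by omega) (by omega) hu1 hu2
  · rintro u hc ⟨j, hj, hu⟩
    exact sibA_chain_disj (by omega) hu (chainA_prefix hc)

lemma mem_Uset {v : Vtx n} : ∀ {m : ℕ} {ω : Edg n → Bool},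
    ω ∈ Uset v m ↔ ∃ i, i < m ∧ ω ∈ Dset v i := by
  intro m
  induction m with
  | zero => intro ω; simp [Uset]
  | succ i ih =>
    intro ω
    show ω ∈ Uset v i ∪ Dset v i ↔ _
    constructor
    · rintro (h | h)
      · obtain ⟨i', hi', hd⟩ := ih.mp h
        exact ⟨i', by omega, hd⟩
      · exact ⟨i, by omega, h⟩
    · rintro ⟨i', hi', hd⟩
      by_cases hc : i' < i
      · exact Or.inl (ih.mpr ⟨i', hc, hd⟩)
      · have : i' = i := by omega
        subst this
        exact Or.inr hd

lemma mem_EUset {v : Vtx n} : ∀ {m : ℕ} {ω : Edg n → Bool},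
    ω ∈ EUset v m ↔ ∃ i, i < m ∧ ω ∈ Eset v i := by
  intro m
  induction m with
  | zero => intro ω; simp [EUset]
  | succ i ih =>
    intro ω
    show ω ∈ EUset v i ∪ Eset v i ↔ _
    constructor
    · rintro (h | h)
      · obtain ⟨i', hi', hd⟩ := ih.mp h
        exact ⟨i', by omega, hd⟩
      · exact ⟨i, by omega, h⟩
    · rintro ⟨i', hi', hd⟩
      by_cases hc : i' < i
      · exact Or.inl (ih.mpr ⟨i', hc, hd⟩)
      · have : i' = i := by omega
        subst this
        exact Or.inr hd

lemma mem_Hset_of {v : Vtx n} {ω : Edg n → Bool} :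
    ∀ {i : ℕ}, (∀ j, j < i → ω ∉ Fset v j) → ω ∈ Hset v i
  | 0, _ => Set.mem_univ ω
  | (i+1), h =>
    ⟨mem_Hset_of (fun j hj => h j (by omega)), h i (by omega)⟩

lemma Hset_notF {v : Vtx n} {ω : Edg n → Bool} :
    ∀ {i j : ℕ}, j < i → ω ∈ Hset v i → ω ∉ Fset v j := by
  intro i
  induction i with
  | zero => intro j hj; omega
  | succ i ih =>
    intro j hj hm
    obtain ⟨h1, h2⟩ := hm
    by_cases hc : j < i
    · exact ih hc h1
    · have : j = i := by omega
      subst this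
      exact h2

lemma Cset_antitone {v : Vtx n} {i j : ℕ} (h : j ≤ i) : Cset v i ⊆ Cset v j := by
  rintro ω hm u ⟨m, hm1, hm2, hu⟩
  exact hm u ⟨m, by omega, hm2, hu⟩

lemma Uset_eq_EUset (v : Vtx n) (m : ℕ) : Uset v m = EUset v m := by
  ext ω
  rw [mem_Uset, mem_EUset]
  constructor
  · rintro ⟨i, him, hd⟩
    have hex : ∃ j, ω ∈ Fset v j := ⟨i, hd.2⟩
    have hj0 : Nat.find hex ≤ i := Nat.find_min' hex hd.2
    refine ⟨Nat.find hex, by omega, Cset_antitone hj0 hd.1, Nat.find_spec hex,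
      mem_Hset_of (fun j hj => Nat.find_min hex hj)⟩
  · rintro ⟨i, him, hE⟩
    exact ⟨i, him, hE.1, hE.2.1⟩

lemma Pr_EUset (p : ℝ) (v : Vtx n) : ∀ m, m ≤ v.1.length →
    Pr p (EUset v m) = ∑ i ∈ Finset.range m, Pr p (Eset v i)
  | 0, _ => by
    show Pr p ∅ = _
    rw [Pr_empty]; simp
  | (m+1), h => by
    show Pr p (EUset v m ∪ Eset v m) = _
    rw [Pr_union_disjoint p ?_, Pr_EUset p v m (by omega), Finset.sum_range_succ]
    · ext ω
      simp only [Set.mem_inter_iff, Set.mem_empty_iff_false, iff_false]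
      rintro ⟨h1, h2⟩
      obtain ⟨j, hj, hEj⟩ := mem_EUset.mp h1
      exact (Hset_notF hj h2.2.2) hEj.2.1

lemma Pr_Uset (p : ℝ) (v : Vtx n) :
    Pr p (Uset v v.1.length) = alpha p n (n - v.1.length) := by
  rw [Uset_eq_EUset, Pr_EUset p v v.1.length (le_refl _)]
  unfold alpha
  have hnk : n - (n - v.1.length) = v.1.length := by
    have := v.2; omega
  rw [hnk, Finset.mul_sum]
  apply Finset.sum_congr rfl
  intro i hi
  rw [Finset.mem_range] at hi
  rw [Pr_Eset p v i hi, pow_succ]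
  ring

end Events


section Char
variable {n : ℕ}

lemma getElem_idx_congr {α : Type*} (l : List α) {j j' : ℕ} (h : j = j') (hj : j < l.length) :
    l[j]'hj = l[j']'(h ▸ hj) := by subst h; rfl

lemma dropLast_take {l : List Bool} {m : ℕ} (h : m + 1 ≤ l.length) :
    (l.take (m+1)).dropLast = l.take m := by
  rw [List.dropLast_eq_take, List.length_take, List.take_take]
  congr 1
  omega

def preV (v : Vtx n) (m : ℕ) : Vtx n :=
  ⟨v.1.take m, le_trans (by rw [List.length_take]; omega) v.2⟩

def Qp (ω : Edg n → Bool) (u : Vtx n) : Prop :=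
  ω ∈ Ydown u ∨ ∃ i, i < u.1.length ∧ ω ∈ Dset u i

lemma Q_step {ω : Edg n → Bool} {a b : Vtx n} (hst : TStep ω a b) (hQ : Qp ω a) : Qp ω b := by
  obtain ⟨e, hcase⟩ := hst
  rcases hcase with ⟨he, hea, hb⟩ | ⟨he, heb, ha⟩
  · -- up step: `e = a`, `b = dropLast a`, `ω e = true`
    have hane : a.1 ≠ [] := hea ▸ e.2.1
    have halen : 0 < a.1.length := List.length_pos_iff.mpr hane
    have hb' : b.1 = a.1.dropLast := by rw [hb, hea]
    rcases hQ with hY | ⟨i, hi, hC, hF⟩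
    · obtain ⟨w, hwlen, haw, hall⟩ := hY
      left
      refine ⟨w, hwlen, ?_, ?_⟩
      · rw [hb']; exact (List.dropLast_prefix _).trans haw
      · intro u hu hlen
        rw [hb', List.length_dropLast] at hlen
        by_cases hcase2 : a.1.length < u.1.length
        · exact hall u hu hcase2
        · have h1 : u.1.length = a.1.length := by omega
          have hu_eq : u.1 = a.1 :=
            List.IsPrefix.eq_of_length
              (List.prefix_of_prefix_length_le hu haw (by omega)) h1
          have heq : u = e := Subtype.ext (hu_eq.trans hea.symm)
          rw [heq]; exact he
    · exfalso
      have hfalse := hC e ⟨a.1.length, by omega, le_refl _, by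
        rw [List.take_length]; exact hea⟩
      rw [he] at hfalse
      exact Bool.noConfusion hfalse
  · -- down step: `e = b`, `a = dropLast b`, `ω e = false`
    have hbne : b.1 ≠ [] := heb ▸ e.2.1
    obtain ⟨c, hcdef⟩ : ∃ c, b.1.getLast hbne = c := ⟨_, rfl⟩
    have hbeq : a.1 ++ [c] = b.1 := by
      rw [ha, heb, ← hcdef]
      exact List.dropLast_append_getLast hbne
    have hblen : b.1.length = a.1.length + 1 := by rw [← hbeq, List.length_append]; simp
    have hble : b.1.length ≤ n := b.2
    rcases hQ with hY | ⟨i, hi, hC, hFc, hFY⟩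
    · -- water was going down from above `a` : now `Dset b 0`
      obtain ⟨w, hwlen, haw, hall⟩ := hY
      right
      refine ⟨0, by omega, ?_⟩
      have hwalen : a.1.length < w.length := by omega
      have hvtake : a.1 = w.take a.1.length := List.prefix_iff_eq_take.mp haw
      obtain ⟨d, hd⟩ : ∃ d, w[a.1.length]'hwalen = d := ⟨_, rfl⟩
      have htake : w.take (a.1.length + 1) = a.1 ++ [d] := by
        rw [List.take_succ, ← hvtake, List.getElem?_eq_getElem hwalen, hd]
        rfl
      have hpfx : a.1 ++ [d] <+: w := htake ▸ List.take_prefix _ _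
      have hdc : d = !c := by
        by_cases hdc' : d = c
        · exfalso
          subst hdc'
          have hew : e.1 <+: w := by rw [heb, ← hbeq]; exact hpfx
          have helen : a.1.length < e.1.length := by rw [heb]; omega
          have := hall e hew helen
          rw [he] at this
          exact Bool.noConfusion this
        · revert hdc'
          cases d <;> cases c <;> simp
      have hsib : sibW b 0 = a.1 ++ [!c] := by
        rw [sibW_eq b 0 (by omega)]
        have h1 : b.1.take (b.1.length - 0 - 1) = a.1 := by
          rw [← hbeq]
          rw [show (a.1 ++ [c]).length - 0 - 1 = a.1.length from by simp]
          rw [List.take_append_of_le_length (le_refl _), List.take_length]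
        have h2 : b.1[b.1.length - 0 - 1]'(by omega) = c := by
          rw [List.getElem_of_eq hbeq.symm]
          exact List.getElem_concat_length (by omega) _
        rw [h1, h2]
      refine ⟨?_, ?_, ?_⟩
      · -- Cset b 0
        rintro u ⟨m, hm1, hm2, hu⟩
        have hm : m = b.1.length := by omega
        have hue : u = e := Subtype.ext (by rw [hu, hm, List.take_length, ← heb])
        rw [hue]; exact he
      · -- sibling edge is oriented up
        intro u hu
        have hu_w : u.1 <+: w := by rw [hu, hsib, ← hdc]; exact hpfx
        have hu_len : a.1.length < u.1.length := by rw [hu, hsib]; simp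
        exact hall u hu_w hu_len
      · -- Ydown of the sibling
        refine ⟨w, hwlen, ?_, ?_⟩
        · show (sibV b 0).1 <+: w
          show sibW b 0 <+: w
          rw [hsib, ← hdc]; exact hpfx
        · intro u hu hlen
          apply hall u hu
          have hslen : (sibV b 0).1.length = a.1.length + 1 := by
            show (sibW b 0).length = _
            rw [hsib]; simp
          omega
    · -- water was coming down from even higher : `Dset a i → Dset b (i+1)`
      right
      have htakeb : ∀ m, m ≤ a.1.length → b.1.take m = a.1.take m := fun m hm => by
        rw [← hbeq, List.take_append_of_le_length hm]
      have hsibeq : sibW b (i+1) = sibW a i := by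
        rw [sibW_eq b (i+1) (by omega), sibW_eq a i hi]
        have hidx : b.1.length - (i+1) - 1 = a.1.length - i - 1 := by omega
        have h1 : b.1.take (b.1.length - (i+1) - 1) = a.1.take (a.1.length - i - 1) := by
          rw [hidx, htakeb _ (by omega)]
        have h2 : b.1[b.1.length - (i+1) - 1]'(by omega)
            = a.1[a.1.length - i - 1]'(by omega) := by
          rw [List.getElem_of_eq hbeq.symm, List.getElem_append_left (by omega)]
          exact getElem_idx_congr _ (by omega) _
        rw [h1, h2]
      refine ⟨i + 1, by omega, ?_, ?_, ?_⟩
      · -- chain edges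
        rintro u ⟨m, hm1, hm2, hu⟩
        by_cases hmm : m ≤ a.1.length
        · exact hC u ⟨m, by omega, hmm, by rw [hu, htakeb m hmm]⟩
        · have hm : m = b.1.length := by omega
          have hue : u = e := Subtype.ext (by rw [hu, hm, List.take_length, ← heb])
          rw [hue]; exact he
      · -- sibling edge
        intro u hu
        apply hFc u
        rw [hu]
        exact hsibeq
      · -- Ydown of the sibling
        have hVeq : sibV b (i+1) = sibV a i := Subtype.ext hsibeq
        rw [hVeq]
        exact hFY

lemma Q_of_Xwet {ω : Edg n → Bool} {v : Vtx n} (h : ω ∈ Xwet v) : Qp ω v := by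
  obtain ⟨w, hwlen, hpath⟩ := h
  have hQw : Qp ω w := by
    left
    refine ⟨w.1, hwlen, List.prefix_refl _, fun u hu hl => ?_⟩
    have h1 := List.IsPrefix.length_le hu
    have h2 := u.2.2
    omega
  induction hpath with
  | refl => exact hQw
  | tail hab hst ih => exact Q_step hst ih

lemma Ydown_subset_Xwet (v : Vtx n) : Ydown v ⊆ Xwet v := by
  rintro ω ⟨w, hwlen, hvw, hall⟩
  have hwle : w.length ≤ n := le_of_eq hwlen
  have hvwlen := List.IsPrefix.length_le hvw
  have climb : ∀ d (u : Vtx n), v.1 <+: u.1 → u.1 <+: w → u.1.length = v.1.length + d →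
      Relation.ReflTransGen (TStep ω) u v := by
    intro d
    induction d with
    | zero =>
      intro u h1 h2 h3
      have heq : u = v := Subtype.ext (List.IsPrefix.eq_of_length h1 (by omega)).symm
      rw [heq]
    | succ d ih =>
      intro u h1 h2 h3
      have hvlen := List.IsPrefix.length_le h1
      have hune : u.1 ≠ [] := List.ne_nil_of_length_pos (by omega)
      have hstep : TStep ω u ⟨u.1.dropLast, le_trans (by
          rw [List.length_dropLast]; omega : u.1.dropLast.length ≤ u.1.length) u.2⟩ := by
        refine ⟨⟨u.1, hune, u.2⟩, Or.inl ⟨?_, rfl, rfl⟩⟩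
        exact hall ⟨u.1, hune, u.2⟩ h2 (by show v.1.length < u.1.length; omega)
      refine Relation.ReflTransGen.head hstep (ih _ ?_ ?_ ?_)
      · apply List.prefix_of_prefix_length_le h1 (List.dropLast_prefix _)
        rw [List.length_dropLast]; omega
      · exact (List.dropLast_prefix _).trans h2
      · rw [List.length_dropLast]; omega
  exact ⟨⟨w, hwle⟩, hwlen,
    climb (n - v.1.length) ⟨w, hwle⟩ hvw (List.prefix_refl _) (by show w.length = _; omega)⟩

lemma Uset_subset_Xwet (v : Vtx n) : Uset v v.1.length ⊆ Xwet v := by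
  intro ω hU
  obtain ⟨i, hi, hC, hFc, hFY⟩ := mem_Uset.mp hU
  have hXs : ω ∈ Xwet (sibV v i) := Ydown_subset_Xwet _ hFY
  obtain ⟨W0, hW0, hpath0⟩ := hXs
  have hstep : TStep ω (sibV v i) (preV v (v.1.length - i - 1)) := by
    refine ⟨sibE v i hi, Or.inl ⟨hFc _ rfl, rfl, ?_⟩⟩
    show v.1.take (v.1.length - i - 1) = (sibW v i).dropLast
    rw [sibW_eq v i hi, List.dropLast_concat]
  have descend : ∀ d, d ≤ i + 1 →
      Relation.ReflTransGen (TStep ω) (preV v (v.1.length - i - 1))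
        (preV v (v.1.length - i - 1 + d)) := by
    intro d
    induction d with
    | zero => intro _; exact Relation.ReflTransGen.refl
    | succ d ih =>
      intro hd
      refine Relation.ReflTransGen.tail (ih (by omega)) ?_
      have hm1 : 1 ≤ v.1.length - i - 1 + d + 1 := by omega
      have hm2 : v.1.length - i - 1 + d + 1 ≤ v.1.length := by omega
      refine ⟨preE v (v.1.length - i - 1 + d + 1) hm1 hm2, Or.inr ⟨?_, rfl, ?_⟩⟩
      · exact hC _ ⟨v.1.length - i - 1 + d + 1, by omega, hm2, rfl⟩
      · show v.1.take (v.1.length - i - 1 + d) = (v.1.take (v.1.length - i - 1 + d + 1)).dropLast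
        rw [dropLast_take (by omega)]
  have hfin : preV v (v.1.length - i - 1 + (i+1)) = v := by
    apply Subtype.ext
    show v.1.take _ = v.1
    rw [show v.1.length - i - 1 + (i+1) = v.1.length from by omega, List.take_length]
  refine ⟨W0, hW0, ?_⟩
  have hdp := descend (i+1) (le_refl _)
  rw [hfin] at hdp
  exact (hpath0.tail hstep).trans hdp

lemma Xwet_eq (v : Vtx n) : Xwet v = Ydown v ∪ Uset v v.1.length := by
  ext ω
  constructor
  · intro h
    rcases Q_of_Xwet h with hY | ⟨i, hi, hD⟩
    · exact Or.inl hY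
    · exact Or.inr (mem_Uset.mpr ⟨i, hi, hD⟩)
  · rintro (hY | hU)
    · exact Ydown_subset_Xwet v hY
    · exact Uset_subset_Xwet v hU

lemma Pr_Xwet (p : ℝ) (v : Vtx n) :
    Pr p (Xwet v) = rho p (n - v.1.length)
      + (1 - rho p (n - v.1.length)) * alpha p n (n - v.1.length) := by
  rw [Xwet_eq v]
  have hind : Pr p (Ydown v ∩ Uset v v.1.length)
      = Pr p (Ydown v) * Pr p (Uset v v.1.length) :=
    Pr_inter_indep p (dep_Ydown v) (dep_Uset v v.1.length (le_refl _))
      (fun u h1 h2 => extS_UA_disj h1 h2)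
  have hincl := Pr_union_add_inter p (Ydown v) (Uset v v.1.length)
  rw [hind, Pr_Ydown, Pr_Uset] at hincl
  linarith [hincl]

end Char


section Final
variable {n : ℕ}

lemma bern_singleton (p : ℝ) (b : Bool) :
    bern p {b} = ENNReal.ofReal (wgt p b) := by
  cases b <;> simp [bern, wgt, Measure.dirac_apply' _ (MeasurableSet.singleton _)]

lemma bern_prob (p : ℝ) (hp0 : 0 ≤ p) (hp1 : p ≤ 1) : IsProbabilityMeasure (bern p) := by
  constructor
  simp [bern, ← ENNReal.ofReal_add hp0 (by linarith : (0:ℝ) ≤ 1 - p)]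

lemma treeMeasure_singleton (p : ℝ) (hp0 : 0 ≤ p) (hp1 : p ≤ 1) (ω : Edg n → Bool) :
    ((treeMeasure n p) {ω}).toReal = Wt p ω := by
  have h1 : ({ω} : Set (Edg n → Bool)) = Set.pi Set.univ (fun e => {ω e}) := by
    ext x; simp [Set.mem_pi, funext_iff]
  unfold treeMeasure
  rw [h1, Measure.pi_pi, ENNReal.toReal_prod]
  unfold Wt
  apply Finset.prod_congr rfl
  intro e _
  rw [bern_singleton, ENNReal.toReal_ofReal]
  unfold wgt
  split <;> linarith

lemma integral_eq_sum (p : ℝ) (hp0 : 0 ≤ p) (hp1 : p ≤ 1) (f : (Edg n → Bool) → ℝ) :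
    ∫ ω, f ω ∂(treeMeasure n p) = ∑ ω : Edg n → Bool, Wt p ω * f ω := by
  haveI : ∀ e : Edg n, IsProbabilityMeasure ((fun _ : Edg n => bern p) e) :=
    fun _ => bern_prob p hp0 hp1
  haveI : IsProbabilityMeasure (treeMeasure n p) := by
    unfold treeMeasure; infer_instance
  rw [MeasureTheory.integral_fintype (f := f) (Integrable.of_finite)]
  apply Finset.sum_congr rfl
  intro ω _
  rw [measureReal_def, treeMeasure_singleton p hp0 hp1, smul_eq_mul]

lemma clusterSize_eq_sum (ω : Edg n → Bool) :
    (clusterSize n ω : ℝ) = ∑ v : Vtx n, (if v.1.length < n ∧ ω ∈ Xwet v then (1:ℝ) else 0) := by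
  unfold clusterSize
  rw [Nat.card_eq_fintype_card, Fintype.card_subtype, Finset.card_filter, Nat.cast_sum]
  apply Finset.sum_congr rfl
  intro v _
  split <;> simp

lemma card_level (m : ℕ) (hm : m ≤ n) :
    (Finset.univ.filter (fun v : Vtx n => v.1.length = m)).card = 2 ^ m := by
  rw [← Fintype.card_subtype]
  have e0 : {v : Vtx n // v.1.length = m} ≃ {l : List Bool // l.length = m} :=
    ⟨fun v => ⟨v.1.1, v.2⟩, fun l => ⟨⟨l.1, by rw [l.2]; exact hm⟩, l.2⟩,
      fun v => Subtype.ext (Subtype.ext rfl), fun l => Subtype.ext rfl⟩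
  have e1 : {v : Vtx n // v.1.length = m} ≃ (Fin m → Bool) :=
    e0.trans (Equiv.vectorEquivFin Bool m)
  rw [Fintype.card_congr e1, Fintype.card_fun]
  simp

end Final


/-- **Expected size of the percolation cluster.**
`E[|C_n|] = ∑_{k=1}^n 2^{n-k} (ρ_k + (1 - ρ_k) α^{(n)}_k)`. -/
theorem expected_clusterSize (n : ℕ) (p : ℝ) (hp0 : 0 ≤ p) (hp1 : p ≤ 1) :
    ∫ ω, (clusterSize n ω : ℝ) ∂(treeMeasure n p) =
      ∑ k ∈ Finset.Icc 1 n,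
        (2 : ℝ) ^ (n - k) * (rho p k + (1 - rho p k) * alpha p n k) := by
  rw [integral_eq_sum p hp0 hp1]
  have step1 : ∑ ω : Edg n → Bool, Wt p ω * (clusterSize n ω : ℝ)
      = ∑ v : Vtx n, (if v.1.length < n then Pr p (Xwet v) else 0) := by
    calc ∑ ω : Edg n → Bool, Wt p ω * (clusterSize n ω : ℝ)
        = ∑ ω : Edg n → Bool, ∑ v : Vtx n,
            Wt p ω * (if v.1.length < n ∧ ω ∈ Xwet v then (1:ℝ) else 0) := by
          apply Finset.sum_congr rfl; intro ω _
          rw [clusterSize_eq_sum, Finset.mul_sum]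
      _ = ∑ v : Vtx n, ∑ ω : Edg n → Bool,
            Wt p ω * (if v.1.length < n ∧ ω ∈ Xwet v then (1:ℝ) else 0) :=
          Finset.sum_comm
      _ = ∑ v : Vtx n, (if v.1.length < n then Pr p (Xwet v) else 0) := by
          apply Finset.sum_congr rfl; intro v _
          by_cases hv : v.1.length < n
          · rw [if_pos hv]
            unfold Pr
            apply Finset.sum_congr rfl; intro ω _
            by_cases hx : ω ∈ Xwet v <;> simp [hx, hv]
          · rw [if_neg hv]
            apply Finset.sum_eq_zero; intro ω _
            simp [hv]
  rw [step1]
  have step2 : ∑ v : Vtx n, (if v.1.length < n then Pr p (Xwet v) else 0)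
      = ∑ m ∈ Finset.range (n+1),
          ∑ v ∈ Finset.univ.filter (fun v : Vtx n => v.1.length = m),
            (if v.1.length < n then Pr p (Xwet v) else 0) :=
    (Finset.sum_fiberwise_of_maps_to
      (fun v _ => Finset.mem_range.mpr (by have := v.2; omega)) _).symm
  rw [step2]
  have step3 : ∀ m ∈ Finset.range (n+1),
      (∑ v ∈ Finset.univ.filter (fun v : Vtx n => v.1.length = m),
          (if v.1.length < n then Pr p (Xwet v) else 0))
      = (if m < n then (2:ℝ)^m * (rho p (n-m) + (1 - rho p (n-m)) * alpha p n (n-m))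
          else 0) := by
    intro m hm
    rw [Finset.mem_range] at hm
    have hconst : ∀ v ∈ Finset.univ.filter (fun v : Vtx n => v.1.length = m),
        (if v.1.length < n then Pr p (Xwet v) else 0)
        = (if m < n then rho p (n-m) + (1 - rho p (n-m)) * alpha p n (n-m) else 0) := by
      intro v hv
      rw [Finset.mem_filter] at hv
      by_cases hmn : m < n
      · rw [if_pos (by omega : v.1.length < n), if_pos hmn, Pr_Xwet, hv.2]
      · rw [if_neg (by omega : ¬ v.1.length < n), if_neg hmn]
    rw [Finset.sum_congr rfl hconst, Finset.sum_const, card_level m (by omega),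
      nsmul_eq_mul]
    by_cases hmn : m < n
    · rw [if_pos hmn, if_pos hmn]; push_cast; ring
    · rw [if_neg hmn, if_neg hmn, mul_zero]
  rw [Finset.sum_congr rfl step3]
  have step4 : ∑ m ∈ Finset.range (n+1),
      (if m < n then (2:ℝ)^m * (rho p (n-m) + (1 - rho p (n-m)) * alpha p n (n-m)) else 0)
      = ∑ m ∈ Finset.range n,
          (2:ℝ)^m * (rho p (n-m) + (1 - rho p (n-m)) * alpha p n (n-m)) := by
    rw [Finset.sum_range_succ, if_neg (lt_irrefl n), add_zero]
    apply Finset.sum_congr rfl; intro m hm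
    rw [Finset.mem_range] at hm
    rw [if_pos hm]
  rw [step4]
  refine Finset.sum_nbij' (fun m => n - m) (fun k => n - k) ?_ ?_ ?_ ?_ ?_
  · intro m hm
    rw [Finset.mem_range] at hm
    beta_reduce
    rw [Finset.mem_Icc]
    omega
  · intro k hk
    rw [Finset.mem_Icc] at hk
    beta_reduce
    rw [Finset.mem_range]
    omega
  · intro m hm
    rw [Finset.mem_range] at hm
    beta_reduce
    omega
  · intro k hk
    rw [Finset.mem_Icc] at hk
    beta_reduce
    omega
  · intro m hm
    rw [Finset.mem_range] at hm
    beta_reduce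
    rw [show n - (n - m) = m from by omega]
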